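/- arXiv:1402.5529 — 2 statements merged into one kernel-verified Lean document; each statement's English description precedes it below -/
import Mathlib

section
/- Let u, v ∈ 𝓤 with u ≤ v. Then for every t > 0, G_t^{neum} * u ≤ G_t^{neum} * v. -/
open MeasureTheory Set Filter

noncomputable section

/-- An element of the space `𝓤`: an atom `u.1 ≥ 0` at the origin together with a
density `u.2` on `ℝ₊`, representing the measure `u.1 δ₀ + u.2 dr`. -/
abbrev UEl := ℝ × (ℝ → ℝ)

/-- Membership in `𝓤`: nonnegative atom, nonnegative density which is in
`L¹(ℝ₊) ∩ L^∞(ℝ₊)`. -/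
def memU (u : UEl) : Prop :=
  0 ≤ u.1 ∧ (∀ r, 0 ≤ u.2 r) ∧
    Integrable u.2 (volume.restrict (Set.Ioi (0:ℝ))) ∧
    ∃ M : ℝ, ∀ r, u.2 r ≤ M

/-- The tail function `F(r; u) = c_u 𝟙_{{0}}(r) + ∫_r^∞ ρ_u`. -/
def tailF (u : UEl) (r : ℝ) : ℝ :=
  (if r = 0 then u.1 else 0) + ∫ x in Set.Ioi r, u.2 x

/-- Total variation distance `|u − v|₁ = |c_u − c_v| + ∫₀^∞ |ρ_u − ρ_v|`. -/
def dist1 (u v : UEl) : ℝ :=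
  |u.1 - v.1| + ∫ r in Set.Ioi (0:ℝ), |u.2 r - v.2 r|

/-- Membership in `𝓤_δ`: in `𝓤` and the density has mass `> jδ`. -/
def memUdelta (j δ : ℝ) (u : UEl) : Prop :=
  memU u ∧ j * δ < ∫ r in Set.Ioi (0:ℝ), u.2 r

/-- `R_δ(u) = inf {r ≥ 0 : F(r; u) = jδ}`. -/
def Rdelta (j δ : ℝ) (u : UEl) : ℝ :=
  sInf {r : ℝ | 0 ≤ r ∧ tailF u r = j * δ}

/-- The cut-and-paste operator `K^{(δ)} u = (jδ, ρ_u 𝟙_{[0, R_δ(u)]})`. -/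
def cutPaste (j δ : ℝ) (u : UEl) : UEl :=
  (j * δ, Set.indicator (Set.Icc 0 (Rdelta j δ u)) u.2)

/-- The Neumann heat kernel on `ℝ₊`. -/
def Gneum (t r r' : ℝ) : ℝ :=
  (Real.sqrt (2 * Real.pi * t))⁻¹ *
    (Real.exp (-(r - r')^2 / (2*t)) + Real.exp (-(r + r')^2 / (2*t)))

/-- The Neumann heat semigroup acting on `𝓤`: the result has zero atom and density
`r ↦ c_u G_t(r,0) + ∫₀^∞ G_t(r,r') ρ_u(r') dr'`. -/
def heat (t : ℝ) (u : UEl) : UEl :=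
  (0, fun r => u.1 * Gneum t r 0 + ∫ r' in Set.Ioi (0:ℝ), Gneum t r r' * u.2 r')

/-- Mass-transport partial order: `u ≤ v` iff `F(r;u) ≤ F(r;v)` for all `r ≥ 0`. -/
def Ule (u v : UEl) : Prop := ∀ r : ℝ, 0 ≤ r → tailF u r ≤ tailF v r

/-- Partial order modulo `m`: `F(r;u) ≤ F(r;v) + m` for all `r ≥ 0`. -/
def UleMod (u v : UEl) (m : ℝ) : Prop :=
  ∀ r : ℝ, 0 ≤ r → tailF u r ≤ tailF v r + m

/-- The lower barrier `S^{(δ,−)}_{kδ}(u)`. -/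
def Sminus (j δ : ℝ) (u : UEl) : ℕ → UEl
  | 0 => u
  | k+1 => cutPaste j δ (heat δ (Sminus j δ u k))

/-- The upper barrier `S^{(δ,+)}_{kδ}(u)`. -/
def Splus (j δ : ℝ) (u : UEl) : ℕ → UEl
  | 0 => u
  | k+1 => heat δ (cutPaste j δ (Splus j δ u k))

/-- A nonnegative density in `L¹(ℝ₊) ∩ L^∞(ℝ₊)`. -/
def goodFn (u : ℝ → ℝ) : Prop :=
  (∀ r, 0 ≤ u r) ∧ Integrable u (volume.restrict (Set.Ioi (0:ℝ))) ∧
    ∃ M : ℝ, ∀ r, u r ≤ M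

/-- Mass-transport order on densities: `∫_r^∞ u ≤ ∫_r^∞ v` for all `r ≥ 0`. -/
def fnLe (u v : ℝ → ℝ) : Prop :=
  ∀ r : ℝ, 0 ≤ r → (∫ x in Set.Ioi r, u x) ≤ ∫ x in Set.Ioi r, v x

end

/-!
Let `μ_u = c_u δ₀ + ρ_u dr`, so that `F(s; u) = μ_u [s, ∞)` for `s ≥ 0`. By Tonelli, the tail of
`G_t * u` at `r` is `∫ Φ_r dμ_u` with `Φ_r(y) = ∫_r^∞ G_t(x, y) dx`. Since
`G_t(x, y) = p(x - y) + p(x + y)` for the centred Gaussian density `p` of variance `t`,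
`Φ_r(y) = Φ_r(0) + ∫_0^y (p(r - s) - p(r + s)) ds`, and the integrand is nonnegative for
`r, s ≥ 0`. The layer-cake formula turns `∫ Φ_r dμ_u` into
`Φ_r(0) F(0; u) + ∫_0^∞ (p(r - s) - p(r + s)) F(s; u) ds`, which is monotone in `F(·; u)`.
-/

open ProbabilityTheory

theorem lintegral_ofReal_eq_add_lintegral_meas_Ici {μ : Measure ℝ} (hμ : ∀ᵐ y ∂μ, 0 ≤ y)
    {φ g : ℝ → ℝ} (hφ : ∀ y, 0 ≤ y → φ y = φ 0 + ∫ s in 0..y, g s) (hφ₀ : 0 ≤ φ 0)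
    (hg : ∀ s, 0 ≤ s → 0 ≤ g s) (hgi : ∀ s, 0 < s → IntervalIntegrable g volume 0 s) :
    ∫⁻ y, ENNReal.ofReal (φ y) ∂μ
      = ENNReal.ofReal (φ 0) * μ (Ici 0) + ∫⁻ s in Ioi 0, μ (Ici s) * ENNReal.ofReal (g s) := by
  have hsplit : ∀ᵐ y ∂μ,
      ENNReal.ofReal (φ y) = ENNReal.ofReal (φ 0) + ENNReal.ofReal (∫ s in 0..y, g s) := by
    filter_upwards [hμ] with y hy
    rw [hφ y hy, ENNReal.ofReal_add hφ₀
      (intervalIntegral.integral_nonneg hy fun s hs => hg s hs.1)]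
  have huniv : μ univ = μ (Ici 0) := measure_congr (ae_eq_univ.2 (ae_iff.1 hμ)).symm
  rw [lintegral_congr_ae hsplit, lintegral_add_left measurable_const, lintegral_const, huniv,
    lintegral_comp_eq_lintegral_meas_le_mul μ hμ aemeasurable_id hgi
      (ae_restrict_of_forall_mem measurableSet_Ioi fun s hs => hg s (le_of_lt hs))]
  rfl

theorem lintegral_ofReal_mono_of_meas_Ici_le {μ ν : Measure ℝ} (hμ : ∀ᵐ y ∂μ, 0 ≤ y)
    (hν : ∀ᵐ y ∂ν, 0 ≤ y) (hμν : ∀ s, 0 ≤ s → μ (Ici s) ≤ ν (Ici s))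
    {φ g : ℝ → ℝ} (hφ : ∀ y, 0 ≤ y → φ y = φ 0 + ∫ s in 0..y, g s) (hφ₀ : 0 ≤ φ 0)
    (hg : ∀ s, 0 ≤ s → 0 ≤ g s) (hgi : ∀ s, 0 < s → IntervalIntegrable g volume 0 s) :
    ∫⁻ y, ENNReal.ofReal (φ y) ∂μ ≤ ∫⁻ y, ENNReal.ofReal (φ y) ∂ν := by
  rw [lintegral_ofReal_eq_add_lintegral_meas_Ici hμ hφ hφ₀ hg hgi,
    lintegral_ofReal_eq_add_lintegral_meas_Ici hν hφ hφ₀ hg hgi]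
  gcongr _ * ?_ + ?_
  · exact hμν 0 le_rfl
  · exact setLIntegral_mono' measurableSet_Ioi fun s hs => by
      gcongr ?_ * _; exact hμν s (le_of_lt hs)

theorem gaussianPDFReal_zero_le_of_sq_le (v : NNReal) {a b : ℝ} (h : a ^ 2 ≤ b ^ 2) :
    gaussianPDFReal 0 v b ≤ gaussianPDFReal 0 v a := by
  simp only [gaussianPDFReal, sub_zero]
  gcongr

theorem Gneum_eq_gaussianPDFReal {t : ℝ} (ht : 0 ≤ t) (x y : ℝ) :
    Gneum t x y = gaussianPDFReal 0 t.toNNReal (x - y) + gaussianPDFReal 0 t.toNNReal (x + y) := by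
  simp [Gneum, gaussianPDFReal, Real.coe_toNNReal t ht, mul_add]

theorem Gneum_nonneg (t x y : ℝ) : 0 ≤ Gneum t x y := by
  unfold Gneum; positivity

theorem Gneum_le {t : ℝ} (ht : 0 ≤ t) (x y : ℝ) :
    Gneum t x y ≤ 2 * (Real.sqrt (2 * Real.pi * t))⁻¹ := by
  have hexp : ∀ z : ℝ, Real.exp (-z ^ 2 / (2 * t)) ≤ 1 := fun z =>
    Real.exp_le_one_iff.2
      (div_nonpos_of_nonpos_of_nonneg (neg_nonpos.2 (sq_nonneg z)) (by positivity))
  unfold Gneum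
  nlinarith [hexp (x - y), hexp (x + y), inv_nonneg.2 (Real.sqrt_nonneg (2 * Real.pi * t))]

theorem continuous_Gneum (t : ℝ) : Continuous fun p : ℝ × ℝ => Gneum t p.1 p.2 := by
  unfold Gneum; fun_prop

theorem integrable_Gneum_left {t : ℝ} (ht : 0 ≤ t) (y : ℝ) : Integrable fun x => Gneum t x y := by
  simp_rw [Gneum_eq_gaussianPDFReal ht]
  exact ((integrable_gaussianPDFReal 0 _).comp_sub_right y).add
    ((integrable_gaussianPDFReal 0 _).comp_add_right y)

theorem integral_Gneum_left {t : ℝ} (ht : 0 < t) (y : ℝ) : ∫ x, Gneum t x y = 2 := by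
  have hv : t.toNNReal ≠ 0 := by simpa using ht
  simp_rw [Gneum_eq_gaussianPDFReal ht.le]
  rw [integral_add ((integrable_gaussianPDFReal 0 _).comp_sub_right y)
      ((integrable_gaussianPDFReal 0 _).comp_add_right y),
    integral_sub_right_eq_self, integral_add_right_eq_self, integral_gaussianPDFReal_eq_one 0 hv]
  norm_num

noncomputable def GneumTail (t r y : ℝ) : ℝ := ∫ x in Ioi r, Gneum t x y

theorem GneumTail_nonneg (t r y : ℝ) : 0 ≤ GneumTail t r y :=
  setIntegral_nonneg measurableSet_Ioi fun x _ => Gneum_nonneg t x y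

theorem GneumTail_le_two {t : ℝ} (ht : 0 < t) (r y : ℝ) : GneumTail t r y ≤ 2 :=
  (setIntegral_le_integral (integrable_Gneum_left ht.le y)
    (ae_of_all _ fun x => Gneum_nonneg t x y)).trans_eq (integral_Gneum_left ht y)

theorem ofReal_GneumTail {t : ℝ} (ht : 0 ≤ t) (r y : ℝ) :
    ENNReal.ofReal (GneumTail t r y) = ∫⁻ x in Ioi r, ENNReal.ofReal (Gneum t x y) :=
  ofReal_integral_eq_lintegral_ofReal (integrable_Gneum_left ht y).integrableOn
    (ae_of_all _ fun x => Gneum_nonneg t x y)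

theorem setIntegral_Ioi_comp_sub_right {E : Type*} [NormedAddCommGroup E] [NormedSpace ℝ E]
    (f : ℝ → E) (a c : ℝ) : ∫ x in Ioi a, f (x - c) = ∫ x in Ioi (a - c), f x := by
  have h := (measurePreserving_sub_right volume c).setIntegral_preimage_emb
    (measurableEmbedding_subRight c) f (Ioi (a - c))
  rwa [preimage_sub_const_Ioi, sub_add_cancel] at h

theorem GneumTail_eq {t : ℝ} (ht : 0 ≤ t) (r y : ℝ) :
    GneumTail t r y = (∫ x in Ioi (r - y), gaussianPDFReal 0 t.toNNReal x)
      + ∫ x in Ioi (r + y), gaussianPDFReal 0 t.toNNReal x := by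
  have hint := integrable_gaussianPDFReal 0 t.toNNReal
  have hplus := setIntegral_Ioi_comp_sub_right (gaussianPDFReal 0 t.toNNReal) r (-y)
  simp only [sub_neg_eq_add] at hplus
  simp_rw [GneumTail, Gneum_eq_gaussianPDFReal ht]
  rw [integral_add (hint.comp_sub_right y).integrableOn (hint.comp_add_right y).integrableOn,
    setIntegral_Ioi_comp_sub_right, hplus]

theorem GneumTail_eq_add_integral {t : ℝ} (ht : 0 ≤ t) (r y : ℝ) :
    GneumTail t r y = GneumTail t r 0 + ∫ s in 0..y,
      (gaussianPDFReal 0 t.toNNReal (r - s) - gaussianPDFReal 0 t.toNNReal (r + s)) := by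
  set p := gaussianPDFReal 0 t.toNNReal
  have hp : Integrable p := integrable_gaussianPDFReal 0 t.toNNReal
  have hleft : ∫ s in 0..y, p (r - s) = (∫ x in Ioi (r - y), p x) - ∫ x in Ioi r, p x := by
    rw [intervalIntegral.integral_comp_sub_left, sub_zero,
      intervalIntegral.integral_Ioi_sub_Ioi' hp.integrableOn hp.integrableOn]
  have hright : ∫ s in 0..y, p (r + s) = (∫ x in Ioi r, p x) - ∫ x in Ioi (r + y), p x := by
    rw [intervalIntegral.integral_comp_add_left, add_zero,
      intervalIntegral.integral_Ioi_sub_Ioi' hp.integrableOn hp.integrableOn]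
  rw [intervalIntegral.integral_sub (hp.comp_sub_left r).intervalIntegrable
      (hp.comp_add_left r).intervalIntegrable, hleft, hright, GneumTail_eq ht, GneumTail_eq ht,
    sub_zero, add_zero]
  ring

namespace UEl

noncomputable def toMeasure (u : UEl) : Measure ℝ :=
  ENNReal.ofReal u.1 • Measure.dirac 0 +
    (volume.restrict (Ioi 0)).withDensity fun y => ENNReal.ofReal (u.2 y)

instance sFinite_toMeasure (u : UEl) : SFinite u.toMeasure := by
  unfold toMeasure; infer_instance

theorem toMeasure_Iio_zero (u : UEl) : u.toMeasure (Iio 0) = 0 := by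
  simp [toMeasure, withDensity_apply _ measurableSet_Iio,
    Measure.restrict_restrict measurableSet_Iio, Iio_inter_Ioi]

theorem ae_nonneg_toMeasure (u : UEl) : ∀ᵐ y ∂u.toMeasure, 0 ≤ y :=
  measure_eq_zero_iff_ae_notMem.1 u.toMeasure_Iio_zero |>.mono fun _ hy => not_lt.1 hy

theorem toMeasure_Ici {u : UEl} (hu : memU u) {s : ℝ} (hs : 0 ≤ s) :
    u.toMeasure (Ici s) = ENNReal.ofReal (tailF u s) := by
  obtain ⟨hc, hρ, hint, -⟩ := hu
  have hset : (Ici s ∩ Ioi 0 : Set ℝ) =ᵐ[volume] Ioi s := by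
    rcases hs.eq_or_lt with rfl | hs
    · rw [inter_eq_right.2 Ioi_subset_Ici_self]; rfl
    · rw [inter_eq_left.2 (Ici_subset_Ioi.2 hs)]
      exact Ioi_ae_eq_Ici.symm
  have hatom : ENNReal.ofReal u.1 * Measure.dirac (0 : ℝ) (Ici s)
      = ENNReal.ofReal (if s = 0 then u.1 else 0) := by
    rcases hs.eq_or_lt with rfl | hs
    · simp
    · simp [hs.ne', not_le.2 hs]
  rw [tailF, ENNReal.ofReal_add (by split_ifs <;> positivity)
      (setIntegral_nonneg measurableSet_Ioi fun y _ => hρ y),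
    ofReal_integral_eq_lintegral_ofReal (IntegrableOn.mono_set hint (Ioi_subset_Ioi hs))
      (ae_of_all _ hρ),
    toMeasure, Measure.add_apply, Measure.smul_apply, smul_eq_mul, hatom,
    withDensity_apply _ measurableSet_Ici, Measure.restrict_restrict measurableSet_Ici,
    Measure.restrict_congr_set hset]

theorem toMeasure_univ {u : UEl} (hu : memU u) :
    u.toMeasure univ = ENNReal.ofReal (tailF u 0) := by
  rw [← toMeasure_Ici hu le_rfl]
  exact measure_congr (ae_eq_univ.2 (ae_iff.1 u.ae_nonneg_toMeasure)).symm

end UEl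

theorem heat_snd_nonneg (t : ℝ) {u : UEl} (hu : memU u) (x : ℝ) : 0 ≤ (heat t u).2 x :=
  add_nonneg (mul_nonneg hu.1 (Gneum_nonneg t x 0))
    (setIntegral_nonneg measurableSet_Ioi fun y _ => mul_nonneg (Gneum_nonneg t x y) (hu.2.1 y))

theorem ofReal_heat_snd {t : ℝ} (ht : 0 ≤ t) {u : UEl} (hu : memU u) (x : ℝ) :
    ENNReal.ofReal ((heat t u).2 x) = ∫⁻ y, ENNReal.ofReal (Gneum t x y) ∂u.toMeasure := by
  obtain ⟨hc, hρ, hint, -⟩ := hu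
  have hG : Continuous fun y => Gneum t x y := by unfold Gneum; fun_prop
  have hGρ : Integrable (fun y => Gneum t x y * u.2 y) (volume.restrict (Ioi 0)) :=
    hint.bdd_mul hG.aestronglyMeasurable (ae_of_all _ fun y => by
      rw [Real.norm_of_nonneg (Gneum_nonneg t x y)]; exact Gneum_le ht x y)
  rw [UEl.toMeasure, lintegral_add_measure, lintegral_smul_measure, lintegral_dirac,
    lintegral_withDensity_eq_lintegral_mul₀ hint.aemeasurable.ennreal_ofReal
      hG.measurable.ennreal_ofReal.aemeasurable]
  simp only [heat]
  rw [ENNReal.ofReal_add (mul_nonneg hc (Gneum_nonneg t x 0))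
      (setIntegral_nonneg measurableSet_Ioi fun y _ => mul_nonneg (Gneum_nonneg t x y) (hρ y)),
    ENNReal.ofReal_mul hc, smul_eq_mul,
    ofReal_integral_eq_lintegral_ofReal hGρ
      (ae_of_all _ fun y => mul_nonneg (Gneum_nonneg t x y) (hρ y))]
  congr 1
  refine lintegral_congr fun y => ?_
  rw [ENNReal.ofReal_mul (Gneum_nonneg t x y), mul_comm]
  rfl

theorem tailF_heat {t : ℝ} (ht : 0 ≤ t) {u : UEl} (hu : memU u) (r : ℝ) :
    tailF (heat t u) r = (∫⁻ y, ENNReal.ofReal (GneumTail t r y) ∂u.toMeasure).toReal := by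
  have hdens : (heat t u).2 = fun x => (∫⁻ y, ENNReal.ofReal (Gneum t x y) ∂u.toMeasure).toReal :=
    funext fun x => by
      rw [← ofReal_heat_snd ht hu x, ENNReal.toReal_ofReal (heat_snd_nonneg t hu x)]
  have hmeas : Measurable fun x => ∫⁻ y, ENNReal.ofReal (Gneum t x y) ∂u.toMeasure :=
    (continuous_Gneum t).measurable.ennreal_ofReal.lintegral_prod_right'
  have hfin : ∀ x, ∫⁻ y, ENNReal.ofReal (Gneum t x y) ∂u.toMeasure < ⊤ := fun x => by
    rw [← ofReal_heat_snd ht hu x]; exact ENNReal.ofReal_lt_top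
  rw [tailF, show (heat t u).1 = 0 from rfl, ite_self, zero_add, hdens,
    integral_toReal hmeas.aemeasurable (ae_of_all _ hfin),
    lintegral_lintegral_swap ((continuous_Gneum t).measurable.ennreal_ofReal.aemeasurable)]
  simp_rw [ofReal_GneumTail ht]

theorem lintegral_ofReal_GneumTail_lt_top {t : ℝ} (ht : 0 < t) {u : UEl} (hu : memU u) (r : ℝ) :
    ∫⁻ y, ENNReal.ofReal (GneumTail t r y) ∂u.toMeasure < ⊤ :=
  calc ∫⁻ y, ENNReal.ofReal (GneumTail t r y) ∂u.toMeasure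
      ≤ ∫⁻ _, ENNReal.ofReal 2 ∂u.toMeasure :=
        lintegral_mono fun y => ENNReal.ofReal_le_ofReal (GneumTail_le_two ht r y)
    _ < ⊤ := by
        rw [lintegral_const, UEl.toMeasure_univ hu]
        exact ENNReal.mul_lt_top ENNReal.ofReal_lt_top ENNReal.ofReal_lt_top

/-- the Neumann heat semigroup preserves the mass-transport order. -/
theorem heat_monotone (u v : UEl) (hu : memU u) (hv : memU v)
    (hle : Ule u v) :
    ∀ t : ℝ, 0 < t → Ule (heat t u) (heat t v) := by
  intro t ht r hr
  set p := gaussianPDFReal 0 t.toNNReal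
  have hslope_nonneg : ∀ s, 0 ≤ s → 0 ≤ p (r - s) - p (r + s) := fun s hs =>
    sub_nonneg.2 (gaussianPDFReal_zero_le_of_sq_le _ (by nlinarith))
  have hslope_int : ∀ a, IntervalIntegrable (fun s => p (r - s) - p (r + s)) volume 0 a :=
    fun a => ((integrable_gaussianPDFReal 0 _).comp_sub_left r).sub
      ((integrable_gaussianPDFReal 0 _).comp_add_left r) |>.intervalIntegrable
  rw [tailF_heat ht.le hu, tailF_heat ht.le hv]
  refine ENNReal.toReal_mono (lintegral_ofReal_GneumTail_lt_top ht hv r).ne ?_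
  refine lintegral_ofReal_mono_of_meas_Ici_le u.ae_nonneg_toMeasure v.ae_nonneg_toMeasure
    (fun s hs => ?_) (fun y _ => GneumTail_eq_add_integral ht.le r y) (GneumTail_nonneg t r 0)
    hslope_nonneg fun a _ => hslope_int a
  rw [UEl.toMeasure_Ici hu hs, UEl.toMeasure_Ici hv hs]
  exact ENNReal.ofReal_le_ofReal (hle s hs)
end

section
/- Let j > 0, δ > 0 and let u, v ∈ 𝓤_δ with u ≤ v. Then: (i) K^{(δ)}u ≤ u; (ii) K^{(δ)}u ≤ K^{(δ)}v; (iii) the truncations satisfy (c_u, ρ_u 𝟙_{[0,R_δ(u)]}) ≤ (c_v, ρ_v 𝟙_{[0,R_δ(v)]}). -/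
open MeasureTheory Set Filter

/-! For `w ∈ 𝓤_δ` the tail `T(r) = ∫_r^∞ ρ_w` is continuous and nonincreasing on `[0, ∞)`, falling
from `T(0) > jδ` to `0`, so `T(R_δ(w)) = jδ`. Hence for `r ≥ 0` the tail of the truncated density
`ρ_w 𝟙_{[0, R_δ(w)]}` is `(T(r) - jδ)⁺`, a monotone function of `T(r)`, and all three comparisons
reduce to comparisons of tails. At `r = 0` the atoms enter; for (ii) the comparison
`T_u(0) ≤ T_v(0)` of the densities alone follows from `T_u ≤ T_v` on `(0, ∞)` by right
continuity. -/

open Topology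

section Tail

variable {ρ σ : ℝ → ℝ} {a : ℝ}

theorem continuousOn_integral_Ioi (hρ : IntegrableOn ρ (Ioi a)) :
    ContinuousOn (fun r => ∫ x in Ioi r, ρ x) (Ici a) := by
  have hprimitive : ContinuousOn (fun r => ∫ x in a..r, ρ x) (Ici a) := by
    intro r hr
    have hint : IntervalIntegrable ρ volume (min a a) (max a (r + 1)) := by
      rw [min_self, max_eq_right (by linarith [mem_Ici.1 hr])]
      exact (intervalIntegrable_iff_integrableOn_Ioc_of_le (by linarith [mem_Ici.1 hr])).2
        (hρ.mono_set Ioc_subset_Ioi_self)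
    refine (intervalIntegral.continuousWithinAt_primitive (measure_singleton r) hint)
      |>.mono_of_mem_nhdsWithin ?_
    rw [← Ici_inter_Iic]
    exact inter_mem_nhdsWithin _ (Iic_mem_nhds (by linarith))
  refine ((continuousOn_const (c := ∫ x in Ioi a, ρ x)).sub hprimitive).congr fun r hr => ?_
  rw [Pi.sub_apply, ← intervalIntegral.integral_Ioi_sub_Ioi hρ hr, sub_sub_cancel]

theorem antitoneOn_integral_Ioi (hρ : IntegrableOn ρ (Ioi a)) (hρ0 : 0 ≤ ρ) :
    AntitoneOn (fun r => ∫ x in Ioi r, ρ x) (Ici a) := fun _ hs _ _ hst =>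
  setIntegral_mono_set (hρ.mono_set (Ioi_subset_Ioi hs)) (.of_forall hρ0)
    (Ioi_subset_Ioi hst).eventuallyLE

theorem tendsto_integral_Ioi_atTop (hρ : IntegrableOn ρ (Ioi a)) :
    Tendsto (fun r => ∫ x in Ioi r, ρ x) atTop (𝓝 0) := by
  have h := tendsto_setIntegral_of_antitone (μ := volume) (f := ρ) (fun r => measurableSet_Ioi)
    (fun _ _ h => Ioi_subset_Ioi h) ⟨a, hρ⟩
  rwa [iInter_eq_empty_iff.2 fun x => ⟨x, self_notMem_Ioi⟩, Measure.restrict_empty,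
    integral_zero_measure] at h

theorem integral_Ioi_le_of_forall_lt (hρ : IntegrableOn ρ (Ioi a)) (hσ : IntegrableOn σ (Ioi a))
    (h : ∀ r, a < r → ∫ x in Ioi r, ρ x ≤ ∫ x in Ioi r, σ x) :
    ∫ x in Ioi a, ρ x ≤ ∫ x in Ioi a, σ x := by
  have hright {τ : ℝ → ℝ} (hτ : IntegrableOn τ (Ioi a)) :
      Tendsto (fun r => ∫ x in Ioi r, τ x) (𝓝[>] a) (𝓝 (∫ x in Ioi a, τ x)) :=
    ((continuousOn_integral_Ioi hτ) a self_mem_Ici).mono Ioi_subset_Ici_self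
  exact le_of_tendsto_of_tendsto (hright hρ) (hright hσ) (eventually_nhdsWithin_of_forall h)

theorem integral_Ioi_indicator_Icc (hρ : IntegrableOn ρ (Ioi a)) (hρ0 : 0 ≤ ρ) {r R : ℝ}
    (hr : a ≤ r) (hR : a ≤ R) :
    ∫ x in Ioi r, (Icc a R).indicator ρ x =
      max ((∫ x in Ioi r, ρ x) - ∫ x in Ioi R, ρ x) 0 := by
  have hinter : Ioi r ∩ Icc a R = Ioc r R := by
    ext x
    simp only [mem_inter_iff, mem_Ioi, mem_Icc, mem_Ioc]
    exact ⟨fun h => ⟨h.1, h.2.2⟩, fun h => ⟨h.1, hr.trans h.1.le, h.2⟩⟩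
  rw [setIntegral_indicator measurableSet_Icc, hinter]
  rcases le_or_gt r R with hrR | hRr
  · have hdiff := intervalIntegral.integral_Ioi_sub_Ioi (hρ.mono_set (Ioi_subset_Ioi hr)) hrR
    rw [intervalIntegral.integral_of_le hrR] at hdiff
    rw [hdiff, max_eq_left (setIntegral_nonneg measurableSet_Ioc fun x _ => hρ0 x)]
  · rw [Ioc_eq_empty hRr.not_gt, Measure.restrict_empty, integral_zero_measure, eq_comm,
      max_eq_right (sub_nonpos.2 (antitoneOn_integral_Ioi hρ hρ0 hR hr hRr.le))]

end Tail

theorem tailF_of_pos (w : UEl) {r : ℝ} (hr : 0 < r) : tailF w r = ∫ x in Ioi r, w.2 x := by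
  simp [tailF, hr.ne']

theorem ule_iff (w w' : UEl) :
    Ule w w' ↔ w.1 + ∫ x in Ioi 0, w.2 x ≤ w'.1 + ∫ x in Ioi 0, w'.2 x ∧
      ∀ r, 0 < r → ∫ x in Ioi r, w.2 x ≤ ∫ x in Ioi r, w'.2 x := by
  refine ⟨fun h => ⟨by simpa [tailF] using h 0 le_rfl, fun r hr => ?_⟩, fun ⟨h0, hpos⟩ r hr => ?_⟩
  · simpa only [tailF_of_pos _ hr] using h r hr.le
  · rcases hr.eq_or_lt with rfl | hr
    · simpa [tailF] using h0
    · simpa only [tailF_of_pos _ hr] using hpos r hr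

variable {j δ : ℝ} {w : UEl}

theorem Rdelta_spec (hjδ : 0 < j * δ) (hw : memUdelta j δ w) :
    0 ≤ Rdelta j δ w ∧ ∫ x in Ioi (Rdelta j δ w), w.2 x = j * δ := by
  obtain ⟨⟨hc, -, hρ, -⟩, hmass⟩ := hw
  set T := fun r => ∫ x in Ioi r, w.2 x
  have hT := continuousOn_integral_Ioi hρ
  -- `tailF w` and `T` differ only at `0`, where both exceed `jδ`.
  have hlevel : {r | 0 ≤ r ∧ tailF w r = j * δ} = Ici 0 ∩ T ⁻¹' {j * δ} := by
    ext r
    rcases lt_trichotomy r 0 with hr | rfl | hr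
    · simp [hr.not_ge]
    · refine iff_of_false (fun ⟨_, h⟩ => ?_) fun ⟨_, h⟩ => hmass.ne' h
      simp only [tailF, if_true] at h
      linarith
    · simp [hr.le, tailF_of_pos w hr, T]
  obtain ⟨b, hb, hb0⟩ :=
    ((tendsto_integral_Ioi_atTop hρ).eventually_lt_const hjδ |>.and (eventually_ge_atTop 0)).exists
  obtain ⟨R, hR, hTR⟩ := intermediate_value_Icc' hb0 (hT.mono Icc_subset_Ici_self) ⟨hb.le, hmass.le⟩
  show Rdelta j δ w ∈ Ici 0 ∩ T ⁻¹' {j * δ}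
  rw [Rdelta, hlevel]
  exact (hT.preimage_isClosed_of_isClosed isClosed_Ici isClosed_singleton).csInf_mem
    ⟨R, hR.1, hTR⟩ ⟨0, fun _ h => h.1⟩

theorem integral_Ioi_indicator_Rdelta (hjδ : 0 < j * δ) (hw : memUdelta j δ w) {r : ℝ}
    (hr : 0 ≤ r) :
    ∫ x in Ioi r, (Icc 0 (Rdelta j δ w)).indicator w.2 x =
      max ((∫ x in Ioi r, w.2 x) - j * δ) 0 := by
  obtain ⟨hR, hTR⟩ := Rdelta_spec hjδ hw
  rw [integral_Ioi_indicator_Icc hw.1.2.2.1 hw.1.2.1 hr hR, hTR]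

/-- properties of the cut-and-paste operator with respect to the
mass-transport order. -/
theorem cutPaste_order (j δ : ℝ) (hj : 0 < j) (hδ : 0 < δ)
    (u v : UEl) (hu : memUdelta j δ u) (hv : memUdelta j δ v)
    (hle : Ule u v) :
    Ule (cutPaste j δ u) u ∧
    Ule (cutPaste j δ u) (cutPaste j δ v) ∧
    Ule (u.1, Set.indicator (Set.Icc 0 (Rdelta j δ u)) u.2)
        (v.1, Set.indicator (Set.Icc 0 (Rdelta j δ v)) v.2) := by
  have hjδ : 0 < j * δ := mul_pos hj hδ
  obtain ⟨hle0, hlepos⟩ := (ule_iff u v).1 hle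
  have hmass_le : ∫ x in Ioi 0, u.2 x ≤ ∫ x in Ioi 0, v.2 x :=
    integral_Ioi_le_of_forall_lt hu.1.2.2.1 hv.1.2.2.1 hlepos
  have hcut_le {r : ℝ} (hr : 0 < r) :
      ∫ x in Ioi r, (Icc 0 (Rdelta j δ u)).indicator u.2 x ≤
        ∫ x in Ioi r, (Icc 0 (Rdelta j δ v)).indicator v.2 x := by
    rw [integral_Ioi_indicator_Rdelta hjδ hu hr.le, integral_Ioi_indicator_Rdelta hjδ hv hr.le]
    exact max_le_max_right 0 (sub_le_sub_right (hlepos r hr) _)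
  simp only [cutPaste, ule_iff, integral_Ioi_indicator_Rdelta hjδ hu le_rfl,
    integral_Ioi_indicator_Rdelta hjδ hv le_rfl, max_eq_left (sub_nonneg.2 hu.2.le),
    max_eq_left (sub_nonneg.2 hv.2.le)]
  refine ⟨⟨by linarith [hu.1.1], fun r hr => ?_⟩, ⟨by linarith, fun _ => hcut_le⟩,
    ⟨by linarith, fun _ => hcut_le⟩⟩
  rw [integral_Ioi_indicator_Rdelta hjδ hu hr.le]
  exact max_le (by linarith) (setIntegral_nonneg measurableSet_Ioi fun x _ => hu.1.2.1 x)
end
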